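/- Asymptotic consistency of cross validation (Theorem 1, conditional form with deterministic candidate sequences). Let p₀ be a probability density on a σ-finite measure space (Ω, μ), and for each n let q_{n,1}, …, q_{n,m_n} be probability densities with q_{n,1} > 0 almost everywhere on {p₀ > 0}. Write v_{n,i} = d_H(p₀, q_{n,i}) and s_n = V(p₀, q_{n,1}), and assume 0 < s_n < ∞ for all n. Suppose there exist constants M > 0, 0 < c < 1 and positive reals t_n such that: (i) d_K(p₀, q_{n,1}) ≤ M v_{n,1}² for all n; (ii) M v_{n,1}² + s_n t_n < c v_{n,i}² for all n and all 2 ≤ i ≤ m_n; (iii) n t_n² s_n → ∞; (iv) n · min_{2 ≤ i ≤ m_n} v_{n,i}² → ∞; and (v) log m_n = o( n · min_{2 ≤ i ≤ m_n} v_{n,i}² ). Let X₁, …, Xₙ be i.i.d. with law P₀ = μ.withDensity p₀. Then P₀^n( ∏_{k=1}^n q_{n,1}(X_k) > ∏_{k=1}^n q_{n,i}(X_k) for every 2 ≤ i ≤ m_n ) → 1 as n → ∞. -/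

import Mathlib

open MeasureTheory Real Filter

/-- A (probability) density on `(Ω, μ)`: a nonnegative measurable function integrating to 1. -/
def IsDensity {Ω : Type*} [MeasurableSpace Ω] (μ : Measure Ω) (p : Ω → ℝ) : Prop :=
  Measurable p ∧ (∀ x, 0 ≤ p x) ∧ Integrable p μ ∧ ∫ x, p x ∂μ = 1

/-- Squared Hellinger distance `d_H²(p, q) = ∫ (√p − √q)² dμ`. -/
noncomputable def hellSq {Ω : Type*} [MeasurableSpace Ω] (μ : Measure Ω) (p q : Ω → ℝ) : ℝ :=
  ∫ x, (Real.sqrt (p x) - Real.sqrt (q x)) ^ 2 ∂μ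

/-- Kullback–Leibler divergence `d_K(p, q) = ∫ p log(p/q) dμ`. -/
noncomputable def klD {Ω : Type*} [MeasurableSpace Ω] (μ : Measure Ω) (p q : Ω → ℝ) : ℝ :=
  ∫ x, p x * Real.log (p x / q x) ∂μ

/-- Second moment `V(p, q) = ∫ p (log(p/q))² dμ`. -/
noncomputable def klV {Ω : Type*} [MeasurableSpace Ω] (μ : Measure Ω) (p q : Ω → ℝ) : ℝ :=
  ∫ x, p x * (Real.log (p x / q x)) ^ 2 ∂μ

/-!
Fix `n` and write `L = log (p₀ / q_{n,1})`. If `q_{n,1}` does not beat every `q_{n,i}` on the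
sample, then either `∑ₖ L(Xₖ)` exceeds its mean `n d_K(p₀, q_{n,1})` by `n s_n t_n`, which by
Chebyshev has probability at most `1 / (n t_n² s_n)`, or, by (i) and (ii),
`∏ₖ q_{n,i}(Xₖ) ≥ exp(-n c v_{n,i}²) ∏ₖ p₀(Xₖ)`. Markov's inequality applied to
`∏ₖ √(q_{n,i} / p₀)(Xₖ)`, whose mean is the `n`-th power of the Hellinger affinity
`1 - v_{n,i}² / 2 ≤ exp(-v_{n,i}² / 2)`, bounds the latter by `exp(-(1 - c) n v_{n,i}² / 2)`.
Condition (v) absorbs the union bound over the `m_n` candidates.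
-/

open ProbabilityTheory Topology

theorem exp_neg_mul_prod_le_prod_of_sum_log_div_le {ι : Type*} {s : Finset ι} {f g : ι → ℝ}
    (hf : ∀ k ∈ s, 0 < f k) (hg : ∀ k ∈ s, 0 < g k) {r : ℝ}
    (h : ∑ k ∈ s, log (f k / g k) ≤ r) : exp (-r) * ∏ k ∈ s, f k ≤ ∏ k ∈ s, g k := by
  have hg' := Finset.prod_pos hg
  rw [← log_prod fun k hk => (div_pos (hf k hk) (hg k hk)).ne', Finset.prod_div_distrib,
    log_le_iff_le_exp (div_pos (Finset.prod_pos hf) hg'), div_le_iff₀ hg'] at h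
  rw [exp_neg, inv_mul_le_iff₀ (exp_pos r)]
  linarith

theorem mul_sqrt_div_eq_sqrt_mul {a b : ℝ} (ha : 0 ≤ a) : a * √(b / a) = √(a * b) := by
  rcases ha.eq_or_lt with rfl | ha
  · simp
  rw [← sqrt_sq ha.le, ← sqrt_mul (sq_nonneg a), sqrt_sq ha.le]
  congr 1
  field_simp

section

variable {Ω : Type*} [MeasurableSpace Ω] {μ : Measure Ω} {P : Measure Ω} [IsProbabilityMeasure P]
  {p q : Ω → ℝ}

theorem integral_withDensity_ofReal (hp : Measurable p) (hp0 : ∀ x, 0 ≤ p x) (g : Ω → ℝ) :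
    ∫ x, g x ∂μ.withDensity (fun x => ENNReal.ofReal (p x)) = ∫ x, p x * g x ∂μ := by
  rw [integral_withDensity_eq_integral_toReal_smul (by fun_prop)
    (.of_forall fun _ => ENNReal.ofReal_lt_top)]
  simp [ENNReal.toReal_ofReal (hp0 _)]

theorem integrable_withDensity_ofReal_iff (hp : Measurable p) (hp0 : ∀ x, 0 ≤ p x)
    {g : Ω → ℝ} :
    Integrable g (μ.withDensity fun x => ENNReal.ofReal (p x)) ↔
      Integrable (fun x => p x * g x) μ := by
  rw [integrable_withDensity_iff_integrable_smul' (by fun_prop)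
    (.of_forall fun _ => ENNReal.ofReal_lt_top)]
  simp [ENNReal.toReal_ofReal (hp0 _)]

theorem ae_pos_withDensity_ofReal (hp : Measurable p) :
    ∀ᵐ x ∂μ.withDensity (fun x => ENNReal.ofReal (p x)), 0 < p x :=
  (ae_withDensity_iff (by fun_prop)).2
    (.of_forall fun _ hx => ENNReal.ofReal_pos.1 (pos_iff_ne_zero.2 hx))

namespace IsDensity

theorem integrable_sqrt_mul (hp : IsDensity μ p) (hq : IsDensity μ q) :
    Integrable (fun x => √(p x * q x)) μ := by
  obtain ⟨hpm, hp0, hpi, -⟩ := hp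
  obtain ⟨hqm, hq0, hqi, -⟩ := hq
  refine ((hpi.add hqi).div_const 2).mono' (hpm.mul hqm).sqrt.aestronglyMeasurable
    (.of_forall fun x => ?_)
  rw [norm_of_nonneg (sqrt_nonneg _), Pi.add_apply,
    sqrt_le_left (by linarith [hp0 x, hq0 x])]
  nlinarith [sq_nonneg (p x - q x)]

theorem integral_sqrt_mul (hp : IsDensity μ p) (hq : IsDensity μ q) :
    ∫ x, √(p x * q x) ∂μ = 1 - hellSq μ p q / 2 := by
  have hint := hp.integrable_sqrt_mul hq
  obtain ⟨-, hp0, hpi, hp1⟩ := hp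
  obtain ⟨-, hq0, hqi, hq1⟩ := hq
  have hsq : ∀ x, (√(p x) - √(q x)) ^ 2 = p x + q x - 2 * √(p x * q x) := fun x => by
    rw [sub_sq, sq_sqrt (hp0 x), sq_sqrt (hq0 x), sqrt_mul (hp0 x)]
    ring
  have hpq : Integrable (fun x => p x + q x) μ := hpi.add hqi
  have hhell : hellSq μ p q = 1 + 1 - 2 * ∫ x, √(p x * q x) ∂μ := by
    simp only [hellSq, hsq]
    rw [integral_sub hpq (hint.const_mul 2), integral_add hpi hqi, integral_const_mul, hp1, hq1]
  linarith

end IsDensity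

theorem measureReal_pi_prod_ge_le {h : Ω → ℝ} (h0 : ∀ y, 0 ≤ h y) (hh : Integrable h P)
    (n : ℕ) {ε : ℝ} (hε : 0 < ε) :
    (Measure.pi fun _ : Fin n => P).real {x | ε ≤ ∏ k, h (x k)} ≤ (∫ y, h y ∂P) ^ n / ε := by
  have hprod := integral_fintype_prod_eq_pow (ι := Fin n) h (μ := P)
  rw [Fintype.card_fin] at hprod
  rw [le_div_iff₀' hε, ← hprod]
  exact mul_meas_ge_le_integral_of_nonneg
    (.of_forall fun x => Finset.prod_nonneg fun k _ => h0 _) (Integrable.fintype_prod fun _ => hh) ε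

theorem measureReal_pi_sum_ge_le {L : Ω → ℝ} (hL : MemLp L 2 P) (n : ℕ) {ε : ℝ} (hε : 0 < ε) :
    (Measure.pi fun _ : Fin n => P).real {x | n * P[L] + ε ≤ ∑ k, L (x k)} ≤
      n * Var[L; P] / ε ^ 2 := by
  set Pn := Measure.pi fun _ : Fin n => P
  set S : (Fin n → Ω) → ℝ := ∑ k, fun x => L (x k) with hS
  have hSapply : ∀ x, S x = ∑ k, L (x k) := fun x => by simp [hS]
  have hcoord : ∀ k, MemLp (fun x : Fin n → Ω => L (x k)) 2 Pn := fun k =>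
    hL.comp_measurePreserving (measurePreserving_eval _ k)
  have hSL2 : MemLp S 2 Pn := memLp_finsetSum' _ fun k _ => hcoord k
  have hmean : Pn[S] = (n : ℝ) * P[L] := by
    simp only [hSapply]
    rw [integral_finsetSum _ fun k _ => (hcoord k).integrable one_le_two]
    simp [Pn, integral_comp_eval (μ := fun _ : Fin n => P) hL.aestronglyMeasurable]
  have hvar : Var[S; Pn] = n * Var[L; P] := by
    rw [hS, variance_sum_pi fun _ => hL]
    simp
  have hsub : {x | n * P[L] + ε ≤ ∑ k, L (x k)} ⊆ {x | ε ≤ |S x - Pn[S]|} := fun x hx => by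
    simp only [Set.mem_ofPred_eq] at hx ⊢
    rw [hmean, hSapply]
    exact (le_sub_iff_add_le'.2 hx).trans (le_abs_self _)
  refine (measureReal_mono (μ := Pn) hsub).trans ?_
  rw [← hvar]
  exact ENNReal.toReal_le_of_le_ofReal (div_nonneg (variance_nonneg S Pn) (sq_nonneg ε))
    (meas_ge_le_variance_div_sq hSL2 hε)

theorem measureReal_pi_exp_neg_mul_prod_le_prod_le
    (hP : P = μ.withDensity fun x => ENNReal.ofReal (p x)) (hp : IsDensity μ p)
    (hq : IsDensity μ q) (n : ℕ) (r : ℝ) :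
    (Measure.pi fun _ : Fin n => P).real {x | exp (-r) * ∏ k, p (x k) ≤ ∏ k, q (x k)} ≤
      exp ((r - n * hellSq μ p q) / 2) := by
  set h : Ω → ℝ := fun y => √(q y / p y)
  have hph : ∀ y, p y * h y = √(p y * q y) := fun y => mul_sqrt_div_eq_sqrt_mul (hp.2.1 y)
  have hint : Integrable h P := by
    rw [hP, integrable_withDensity_ofReal_iff hp.1 hp.2.1]
    simpa only [hph] using hp.integrable_sqrt_mul hq
  have hmean : ∫ y, h y ∂P = 1 - hellSq μ p q / 2 := by
    rw [hP, integral_withDensity_ofReal hp.1 hp.2.1]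
    simpa only [hph] using hp.integral_sqrt_mul hq
  have hmean_nonneg : 0 ≤ 1 - hellSq μ p q / 2 := hmean ▸ integral_nonneg fun _ => sqrt_nonneg _
  have hppos : ∀ᵐ x ∂(Measure.pi fun _ : Fin n => P), ∀ k, 0 < p (x k) :=
    ae_all_iff.2 fun k => Measure.tendsto_eval_ae_ae (μ := fun _ : Fin n => P) |>.eventually
      (hP ▸ ae_pos_withDensity_ofReal hp.1)
  have hsub : {x | exp (-r) * ∏ k, p (x k) ≤ ∏ k, q (x k)} ≤ᵐ[Measure.pi fun _ : Fin n => P]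
      {x | exp (-r / 2) ≤ ∏ k, h (x k)} := by
    filter_upwards [hppos] with x hx hle
    have hratio : exp (-r) ≤ ∏ k, q (x k) / p (x k) := by
      rwa [Finset.prod_div_distrib, le_div_iff₀ (Finset.prod_pos fun k _ => hx k)]
    calc exp (-r / 2) = √(exp (-r)) := by rw [← exp_half]
      _ ≤ √(∏ k, q (x k) / p (x k)) := sqrt_le_sqrt hratio
      _ = ∏ k, h (x k) := sqrt_prod _ fun k _ => div_nonneg (hq.2.1 _) (hp.2.1 _)
  calc _ ≤ (Measure.pi fun _ : Fin n => P).real {x | exp (-r / 2) ≤ ∏ k, h (x k)} :=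
        ENNReal.toReal_mono (measure_ne_top _ _) (measure_mono_ae hsub)
    _ ≤ (1 - hellSq μ p q / 2) ^ n / exp (-r / 2) := by
        rw [← hmean]
        exact measureReal_pi_prod_ge_le (fun _ => sqrt_nonneg _) hint n (exp_pos _)
    _ ≤ exp (-(hellSq μ p q / 2)) ^ n / exp (-r / 2) := by
        gcongr
        linarith [add_one_le_exp (-(hellSq μ p q / 2))]
    _ = exp ((r - n * hellSq μ p q) / 2) := by
        rw [← exp_nat_mul, ← exp_sub]
        ring_nf

theorem measureReal_pi_sum_log_div_ge_le
    (hP : P = μ.withDensity fun x => ENNReal.ofReal (p x)) (hp : IsDensity μ p)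
    (hq : Measurable q) (hV : Integrable (fun x => p x * log (p x / q x) ^ 2) μ)
    (n : ℕ) {ε : ℝ} (hε : 0 < ε) :
    (Measure.pi fun _ : Fin n => P).real
        {x | n * klD μ p q + ε ≤ ∑ k, log (p (x k) / q (x k))} ≤ n * klV μ p q / ε ^ 2 := by
  set L : Ω → ℝ := fun y => log (p y / q y)
  have hLm : AEStronglyMeasurable L P := (measurable_log.comp (hp.1.div hq)).aestronglyMeasurable
  have hL2 : MemLp L 2 P := by
    rw [memLp_two_iff_integrable_sq hLm, hP, integrable_withDensity_ofReal_iff hp.1 hp.2.1]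
    exact hV
  have hmean : P[L] = klD μ p q := by
    rw [hP, integral_withDensity_ofReal hp.1 hp.2.1]
    rfl
  have hvar : Var[L; P] ≤ klV μ p q := by
    refine (variance_le_expectation_sq hLm).trans_eq ?_
    rw [hP, integral_withDensity_ofReal hp.1 hp.2.1]
    rfl
  calc _ = (Measure.pi fun _ : Fin n => P).real {x | n * P[L] + ε ≤ ∑ k, L (x k)} := by
        rw [hmean]
    _ ≤ n * Var[L; P] / ε ^ 2 := measureReal_pi_sum_ge_le hL2 n hε
    _ ≤ n * klV μ p q / ε ^ 2 := by gcongr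

theorem measureReal_pi_compl_forall_prod_lt_le {ι : Type*}
    (hP : P = μ.withDensity fun x => ENNReal.ofReal (p x)) (hp : IsDensity μ p)
    {q₁ : Ω → ℝ} (hq₁ : Measurable q₁) (hq₁pos : ∀ᵐ x ∂μ, 0 < p x → 0 < q₁ x)
    (hV : Integrable (fun x => p x * log (p x / q₁ x) ^ 2) μ)
    {q : ι → Ω → ℝ} {s : Finset ι} (hq : ∀ i ∈ s, IsDensity μ (q i))
    {n : ℕ} (hn : 0 < n) {a c ε : ℝ} (hε : 0 < ε) (ha : klD μ p q₁ + ε ≤ a)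
    (hac : ∀ i ∈ s, a ≤ c * hellSq μ p (q i)) :
    (Measure.pi fun _ : Fin n => P).real {x | ∀ i ∈ s, ∏ k, q i (x k) < ∏ k, q₁ (x k)}ᶜ ≤
      klV μ p q₁ / (n * ε ^ 2) + ∑ i ∈ s, exp (-((1 - c) / 2) * (n * hellSq μ p (q i))) := by
  set Pn := Measure.pi fun _ : Fin n => P
  have hpos : ∀ᵐ x ∂Pn, ∀ k, 0 < p (x k) ∧ 0 < q₁ (x k) := by
    have : ∀ᵐ y ∂P, 0 < p y ∧ 0 < q₁ y := by
      filter_upwards [hP ▸ ae_pos_withDensity_ofReal hp.1,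
        hP ▸ (withDensity_absolutelyContinuous μ _).ae_le hq₁pos] with y hpy hqy
      exact ⟨hpy, hqy hpy⟩
    exact ae_all_iff.2 fun k =>
      Measure.tendsto_eval_ae_ae (μ := fun _ : Fin n => P) |>.eventually this
  set B := {x : Fin n → Ω | n * klD μ p q₁ + n * ε ≤ ∑ k, log (p (x k) / q₁ (x k))}
  set C : ι → Set (Fin n → Ω) := fun i =>
    {x | exp (-(n * (c * hellSq μ p (q i)))) * ∏ k, p (x k) ≤ ∏ k, q i (x k)}
  have hcover : {x | ∀ i ∈ s, ∏ k, q i (x k) < ∏ k, q₁ (x k)}ᶜ ≤ᵐ[Pn]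
      (B ∪ ⋃ i ∈ s, C i : Set (Fin n → Ω)) := by
    filter_upwards [hpos] with x hx hlose
    obtain ⟨i, hi, hle⟩ : ∃ i ∈ s, ∏ k, q₁ (x k) ≤ ∏ k, q i (x k) := by
      by_contra! hwin
      exact hlose hwin
    by_cases hB : x ∈ B
    · exact Or.inl hB
    refine Or.inr (Set.mem_biUnion hi ?_)
    have hsum : ∑ k, log (p (x k) / q₁ (x k)) ≤ n * a := by
      simp only [B, Set.mem_ofPred_eq, not_le] at hB
      nlinarith
    calc exp (-(n * (c * hellSq μ p (q i)))) * ∏ k, p (x k)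
        ≤ exp (-(n * a)) * ∏ k, p (x k) := by
          gcongr
          · exact Finset.prod_nonneg fun k _ => (hx k).1.le
          · exact hac i hi
      _ ≤ ∏ k, q₁ (x k) := exp_neg_mul_prod_le_prod_of_sum_log_div_le
          (fun k _ => (hx k).1) (fun k _ => (hx k).2) hsum
      _ ≤ ∏ k, q i (x k) := hle
  calc _ ≤ Pn.real (B ∪ ⋃ i ∈ s, C i) :=
        ENNReal.toReal_mono (measure_ne_top _ _) (measure_mono_ae hcover)
    _ ≤ Pn.real B + ∑ i ∈ s, Pn.real (C i) :=
        (measureReal_union_le _ _).trans (add_le_add_right (measureReal_biUnion_finset_le _ _) _)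
    _ ≤ _ := by
        gcongr with i hi
        · refine (measureReal_pi_sum_log_div_ge_le hP hp hq₁ hV n
            (by positivity : (0 : ℝ) < n * ε)).trans_eq ?_
          field_simp
        · refine (measureReal_pi_exp_neg_mul_prod_le_prod_le hP hp (hq i hi) n _).trans_eq ?_
          congr 1
          ring

end

theorem sum_exp_neg_mul_le_card_mul_exp_neg_mul_inf' {ι : Type*} (s : Finset ι)
    (hs : s.Nonempty) (f : ι → ℝ) {κ a : ℝ} (hκ : 0 ≤ κ) (ha : 0 ≤ a) :
    ∑ i ∈ s, exp (-κ * (a * f i)) ≤ s.card * exp (-κ * (a * s.inf' hs f)) := by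
  rw [← nsmul_eq_mul]
  refine Finset.sum_le_card_nsmul _ _ _ fun i hi => exp_le_exp.2 ?_
  rw [neg_mul, neg_mul, neg_le_neg_iff]
  gcongr
  exact Finset.inf'_le _ hi

theorem tendsto_mul_exp_neg_mul_of_log_isLittleO {α : Type*} {l : Filter α} {m W : α → ℝ}
    (hm : ∀ᶠ x in l, 0 < m x) (hW : Tendsto W l atTop)
    (hmW : (fun x => log (m x)) =o[l] W) {κ : ℝ} (hκ : 0 < κ) :
    Tendsto (fun x => m x * exp (-κ * W x)) l (𝓝 0) := by
  have hexp : Tendsto (fun x => log (m x) - κ * W x) l atBot := by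
    refine tendsto_atBot_mono' l ?_
      (tendsto_neg_atTop_atBot.comp (hW.const_mul_atTop (half_pos hκ)))
    filter_upwards [hmW.bound (half_pos hκ), hW.eventually_ge_atTop 0] with x hx hW0
    rw [norm_of_nonneg hW0, Real.norm_eq_abs] at hx
    simp only [Function.comp_apply]
    linarith [le_abs_self (log (m x))]
  refine (tendsto_exp_atBot.comp hexp).congr' ?_
  filter_upwards [hm] with x hx
  rw [Function.comp_apply, exp_sub, exp_log hx, neg_mul, exp_neg, div_eq_mul_inv]

theorem tendsto_measure_one_of_measureReal_compl_le {ι : Type*} {l : Filter ι}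
    {α : ι → Type*} [∀ n, MeasurableSpace (α n)] {P : ∀ n, Measure (α n)}
    [∀ n, IsProbabilityMeasure (P n)] {E : ∀ n, Set (α n)} {b : ι → ℝ}
    (hb : Tendsto b l (𝓝 0)) (hE : ∀ᶠ n in l, (P n).real (E n)ᶜ ≤ b n) :
    Tendsto (fun n => P n (E n)) l (𝓝 1) := by
  have hcompl : Tendsto (fun n => P n (E n)ᶜ) l (𝓝 0) := by
    refine tendsto_of_tendsto_of_tendsto_of_le_of_le' tendsto_const_nhds
      (ENNReal.ofReal_zero ▸ ENNReal.tendsto_ofReal hb) (.of_forall fun _ => zero_le) ?_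
    filter_upwards [hE] with n hn
    exact (ENNReal.le_ofReal_iff_toReal_le (measure_ne_top _ _)
      (measureReal_nonneg.trans hn)).2 hn
  have hlower : ∀ n, 1 - P n (E n)ᶜ ≤ P n (E n) := fun n => by
    rw [tsub_le_iff_right, ← measure_univ (μ := P n), ← Set.union_compl_self (E n)]
    exact measure_union_le _ _
  refine tendsto_of_tendsto_of_tendsto_of_le_of_le ?_ tendsto_const_nhds hlower
    fun _ => prob_le_one
  simpa using ENNReal.Tendsto.sub tendsto_const_nhds hcompl (.inl ENNReal.one_ne_top)

theorem cv_consistency_general {Ω : Type*} [MeasurableSpace Ω]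
    (μ : Measure Ω) (p₀ : Ω → ℝ)
    (hp₀ : IsDensity μ p₀)
    (m : ℕ → ℕ) (hm : ∀ n, 2 ≤ m n)
    (q : ℕ → ℕ → Ω → ℝ)
    (hq : ∀ n, ∀ i ∈ Finset.Icc 1 (m n), IsDensity μ (q n i))
    (hq₁pos : ∀ n, ∀ᵐ x ∂μ, 0 < p₀ x → 0 < q n 1 x)
    (hVint : ∀ n, Integrable (fun x => p₀ x * (Real.log (p₀ x / q n 1 x)) ^ 2) μ)
    (M c : ℝ) (hc1 : c < 1)
    (t : ℕ → ℝ) (ht : ∀ n, 0 < t n)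
    -- (i) d_K(p₀, q_{n,1}) ≤ M v_{n,1}²
    (hdK : ∀ n, klD μ p₀ (q n 1) ≤ M * hellSq μ p₀ (q n 1))
    -- (ii) M v_{n,1}² + s_n t_n < c v_{n,i}² for all 2 ≤ i ≤ m_n
    (hsep : ∀ n, ∀ i ∈ Finset.Icc 2 (m n),
      M * hellSq μ p₀ (q n 1) + klV μ p₀ (q n 1) * t n < c * hellSq μ p₀ (q n i))
    -- (iii) n t_n² s_n → ∞
    (hiii : Tendsto (fun n : ℕ => (n : ℝ) * t n ^ 2 * klV μ p₀ (q n 1)) atTop atTop)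
    -- (iv) n · min_{2 ≤ i ≤ m_n} v_{n,i}² → ∞
    (hiv : Tendsto (fun n : ℕ => (n : ℝ) *
        (Finset.Icc 2 (m n)).inf' (Finset.nonempty_Icc.mpr (hm n))
          (fun i => hellSq μ p₀ (q n i))) atTop atTop)
    -- (v) log m_n = o( n · min_{2 ≤ i ≤ m_n} v_{n,i}² )
    (hv : (fun n : ℕ => Real.log (m n)) =o[atTop]
        (fun n : ℕ => (n : ℝ) *
          (Finset.Icc 2 (m n)).inf' (Finset.nonempty_Icc.mpr (hm n))
            (fun i => hellSq μ p₀ (q n i))))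
    (P₀ : Measure Ω) [IsProbabilityMeasure P₀]
    (hP₀ : P₀ = μ.withDensity fun x => ENNReal.ofReal (p₀ x)) :
    Tendsto (fun n : ℕ =>
        (Measure.pi fun _ : Fin n => P₀)
          {x : Fin n → Ω |
            ∀ i ∈ Finset.Icc 2 (m n),
              ∏ k : Fin n, q n i (x k) < ∏ k : Fin n, q n 1 (x k)})
      atTop (nhds 1) := by
  set W : ℕ → ℝ := fun n => n * (Finset.Icc 2 (m n)).inf' (Finset.nonempty_Icc.mpr (hm n))
    fun i => hellSq μ p₀ (q n i)
  have hκ : 0 < (1 - c) / 2 := by linarith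
  refine tendsto_measure_one_of_measureReal_compl_le (b := fun n =>
      (n * t n ^ 2 * klV μ p₀ (q n 1))⁻¹ + m n * exp (-((1 - c) / 2) * W n)) ?_ ?_
  · simpa using hiii.inv_tendsto_atTop.add <| tendsto_mul_exp_neg_mul_of_log_isLittleO
      (.of_forall fun n => by have := hm n; positivity) hiv hv hκ
  filter_upwards [hiii.eventually_gt_atTop 0] with n hn
  have hn0 : 0 < n := Nat.pos_of_ne_zero (by rintro rfl; simp at hn)
  have hs0 : 0 < klV μ p₀ (q n 1) := pos_of_mul_pos_right hn (by positivity)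
  refine (measureReal_pi_compl_forall_prod_lt_le hP₀ hp₀
    (hq n 1 (Finset.mem_Icc.2 ⟨le_rfl, one_le_two.trans (hm n)⟩)).1 (hq₁pos n) (hVint n)
    (fun i hi => hq n i (Finset.Icc_subset_Icc_left one_le_two hi)) hn0 (mul_pos hs0 (ht n))
    (by linarith [hdK n]) (fun i hi => (hsep n i hi).le)).trans (add_le_add ?_ ?_)
  · exact le_of_eq (by field_simp)
  refine (sum_exp_neg_mul_le_card_mul_exp_neg_mul_inf' _ (Finset.nonempty_Icc.mpr (hm n)) _
    hκ.le n.cast_nonneg).trans ?_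
  gcongr
  rw [Nat.card_Icc]
  exact_mod_cast Nat.sub_le_of_le_add (by omega)

/-- Asymptotic consistency of cross validation (Theorem 1, conditional form with deterministic
candidate sequences `q n i`, `1 ≤ i ≤ m n`): under conditions (i)–(v), the probability that
`q n 1` attains strictly the largest likelihood among all candidates tends to 1. -/
theorem cv_consistency {Ω : Type*} [MeasurableSpace Ω]
    (μ : Measure Ω) [SigmaFinite μ] (p₀ : Ω → ℝ)
    (hp₀ : IsDensity μ p₀)
    (m : ℕ → ℕ) (hm : ∀ n, 2 ≤ m n)
    (q : ℕ → ℕ → Ω → ℝ)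
    (hq : ∀ n, ∀ i ∈ Finset.Icc 1 (m n), IsDensity μ (q n i))
    (hq₁pos : ∀ n, ∀ᵐ x ∂μ, 0 < p₀ x → 0 < q n 1 x)
    (hVint : ∀ n, Integrable (fun x => p₀ x * (Real.log (p₀ x / q n 1 x)) ^ 2) μ)
    (hVpos : ∀ n, 0 < klV μ p₀ (q n 1))
    (M c : ℝ) (hM : 0 < M) (hc0 : 0 < c) (hc1 : c < 1)
    (t : ℕ → ℝ) (ht : ∀ n, 0 < t n)
    -- (i) d_K(p₀, q_{n,1}) ≤ M v_{n,1}²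
    (hdK : ∀ n, klD μ p₀ (q n 1) ≤ M * hellSq μ p₀ (q n 1))
    -- (ii) M v_{n,1}² + s_n t_n < c v_{n,i}² for all 2 ≤ i ≤ m_n
    (hsep : ∀ n, ∀ i ∈ Finset.Icc 2 (m n),
      M * hellSq μ p₀ (q n 1) + klV μ p₀ (q n 1) * t n < c * hellSq μ p₀ (q n i))
    -- (iii) n t_n² s_n → ∞
    (hiii : Tendsto (fun n : ℕ => (n : ℝ) * t n ^ 2 * klV μ p₀ (q n 1)) atTop atTop)
    -- (iv) n · min_{2 ≤ i ≤ m_n} v_{n,i}² → ∞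
    (hiv : Tendsto (fun n : ℕ => (n : ℝ) *
        (Finset.Icc 2 (m n)).inf' (Finset.nonempty_Icc.mpr (hm n))
          (fun i => hellSq μ p₀ (q n i))) atTop atTop)
    -- (v) log m_n = o( n · min_{2 ≤ i ≤ m_n} v_{n,i}² )
    (hv : (fun n : ℕ => Real.log (m n)) =o[atTop]
        (fun n : ℕ => (n : ℝ) *
          (Finset.Icc 2 (m n)).inf' (Finset.nonempty_Icc.mpr (hm n))
            (fun i => hellSq μ p₀ (q n i))))
    (P₀ : Measure Ω) [IsProbabilityMeasure P₀]
    (hP₀ : P₀ = μ.withDensity fun x => ENNReal.ofReal (p₀ x)) :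
    Tendsto (fun n : ℕ =>
        (Measure.pi fun _ : Fin n => P₀)
          {x : Fin n → Ω |
            ∀ i ∈ Finset.Icc 2 (m n),
              ∏ k : Fin n, q n i (x k) < ∏ k : Fin n, q n 1 (x k)})
      atTop (nhds 1) :=
  cv_consistency_general μ p₀ hp₀ m hm q hq hq₁pos hVint M c hc1 t ht hdK hsep hiii hiv hv P₀ hP₀
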